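/- arXiv:math/0606776 — 5 statements merged into one kernel-verified Lean document; each statement's English description precedes it below -/
import Mathlib

section
/- Let {U_σ(t,τ)}, σ ∈ Σ, be a family of processes on a complete metric space X that is uniformly (with respect to σ ∈ Σ) asymptotically compact. Then for any τ ∈ ℝ and any nonempty bounded set B ⊂ X, the uniform ω-limit set ω_{τ,Σ}(B) is nonempty and compact in X. -/
open Filter Topology Metric Set

/-- A family of processes `U σ t τ : X → X` (defined for `t ≥ τ`). -/
def IsProcessFamily {X : Type*} {S : Type*} (U : S → ℝ → ℝ → X → X) : Prop :=
  (∀ (σ : S) (τ : ℝ) (x : X), U σ τ τ x = x) ∧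
  (∀ (σ : S) (t s τ : ℝ), τ ≤ s → s ≤ t → ∀ x : X, U σ t s (U σ s τ x) = U σ t τ x)

/-- The uniform (w.r.t. `σ ∈ Σ`) ω-limit set of `B` at initial time `τ`. -/
def uniformOmegaLimit {X : Type*} {S : Type*} [MetricSpace X]
    (U : S → ℝ → ℝ → X → X) (B : Set X) (τ : ℝ) : Set X :=
  ⋂ t ∈ Ici τ, closure (⋃ (σ : S), ⋃ s ∈ Ici t, U σ s τ '' B)

/-- The family of processes is uniformly (w.r.t. `σ ∈ Σ`) asymptotically compact:
for any fixed `τ`, any bounded sequence `uₙ`, any symbols `σₙ` and any `tₙ ≥ τ` with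
`tₙ → ∞`, the sequence `U_{σₙ}(tₙ,τ) uₙ` is precompact (has a convergent subsequence). -/
def UniformlyAsympCompact {X : Type*} {S : Type*} [MetricSpace X]
    (U : S → ℝ → ℝ → X → X) : Prop :=
  ∀ (τ : ℝ) (u : ℕ → X) (σ : ℕ → S) (t : ℕ → ℝ),
    Bornology.IsBounded (Set.range u) → (∀ n, τ ≤ t n) → Tendsto t atTop atTop →
    ∃ (φ : ℕ → ℕ) (x : X), StrictMono φ ∧
      Tendsto (fun n => U (σ (φ n)) (t (φ n)) τ (u (φ n))) atTop (𝓝 x)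

/-- For a uniformly asymptotically compact family of processes, the uniform ω-limit
set of any nonempty bounded set is nonempty and compact. -/
theorem omegaLimit_nonempty_compact {X S : Type*} [MetricSpace X] [CompleteSpace X]
    [Nonempty S]
    (U : S → ℝ → ℝ → X → X) (hU : IsProcessFamily U)
    (hAC : UniformlyAsympCompact U)
    (B : Set X) (hB : Bornology.IsBounded B) (hBne : B.Nonempty) (τ : ℝ) :
    (uniformOmegaLimit U B τ).Nonempty ∧ IsCompact (uniformOmegaLimit U B τ) := by
  have hclosed : IsClosed (uniformOmegaLimit U B τ) := by
    unfold uniformOmegaLimit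
    exact isClosed_biInter fun t _ => isClosed_closure
  constructor
  · -- nonemptiness
    obtain ⟨b, hb⟩ := hBne
    obtain ⟨σ0⟩ := ‹Nonempty S›
    obtain ⟨φ, x, hφ, hx⟩ := hAC τ (fun _ => b) (fun _ => σ0) (fun n => τ + n)
      (hB.subset (by rintro y ⟨n, rfl⟩; exact hb))
      (fun n => le_add_of_nonneg_right (Nat.cast_nonneg n))
      (tendsto_atTop_add_const_left _ τ tendsto_natCast_atTop_atTop)
    refine ⟨x, ?_⟩
    simp only [uniformOmegaLimit, mem_iInter, mem_Ici]
    intro t ht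
    refine mem_closure_of_tendsto hx ?_
    obtain ⟨N, hN⟩ := exists_nat_ge (t - τ)
    filter_upwards [eventually_ge_atTop N] with n hn
    have h1 : t ≤ τ + (φ n : ℝ) := by
      have : (N : ℝ) ≤ (φ n : ℝ) := by
        exact_mod_cast hn.trans (hφ.le_apply)
      linarith
    exact mem_iUnion.2 ⟨σ0, mem_iUnion₂.2 ⟨τ + φ n, h1, mem_image_of_mem _ hb⟩⟩
  · -- compactness
    have hseq : IsSeqCompact (uniformOmegaLimit U B τ) := by
      intro x hx
      have h : ∀ n : ℕ, ∃ (σ : S) (s : ℝ) (b : X), τ + n ≤ s ∧ b ∈ B ∧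
          dist (x n) (U σ s τ b) < 1 / (n + 1) := by
        intro n
        have hxn : x n ∈ closure (⋃ (σ : S), ⋃ s ∈ Ici (τ + n), U σ s τ '' B) := by
          have := hx n
          simp only [uniformOmegaLimit, mem_iInter, mem_Ici] at this
          exact this (τ + n) (le_add_of_nonneg_right (Nat.cast_nonneg n))
        obtain ⟨y, hy, hdy⟩ := Metric.mem_closure_iff.mp hxn (1 / (n + 1)) (by positivity)
        simp only [mem_iUnion, mem_Ici] at hy
        obtain ⟨σ, s, hs, b, hbB, rfl⟩ := hy
        exact ⟨σ, s, b, hs, hbB, hdy⟩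
      choose σn sn bn hsn hbn hdn using h
      obtain ⟨φ, y, hφ, hy⟩ := hAC τ bn σn sn
        (hB.subset (by rintro z ⟨n, rfl⟩; exact hbn n))
        (fun n => le_trans (le_add_of_nonneg_right (Nat.cast_nonneg n)) (hsn n))
        (tendsto_atTop_mono hsn
          (tendsto_atTop_add_const_left _ τ tendsto_natCast_atTop_atTop))
      have hd0 : Tendsto (fun n => dist (x (φ n)) (U (σn (φ n)) (sn (φ n)) τ (bn (φ n))))
          atTop (𝓝 0) := by
        refine squeeze_zero (fun n => dist_nonneg) (fun n => (hdn (φ n)).le) ?_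
        have h1 : Tendsto (fun n : ℕ => 1 / ((φ n : ℝ) + 1)) atTop (𝓝 0) := by
          apply Tendsto.comp tendsto_one_div_add_atTop_nhds_zero_nat
          exact hφ.tendsto_atTop
        exact h1
      have htend : Tendsto (x ∘ φ) atTop (𝓝 y) := by
        refine tendsto_of_tendsto_of_dist hy ?_
        simpa [dist_comm] using hd0
      exact ⟨y, hclosed.mem_of_tendsto htend (Eventually.of_forall fun n => hx (φ n)),
        φ, hφ, htend⟩
    exact hseq.isCompact
end

section
/- Let {U_σ(t,τ)}, σ ∈ Σ, be a family of processes on a complete metric space X that is uniformly (with respect to σ ∈ Σ) asymptotically compact. Then for any τ ∈ ℝ and any nonempty bounded set B ⊂ X, one has lim_{t→+∞} sup_{σ∈Σ} dist(U_σ(t,τ)B, ω_{τ,Σ}(B)) = 0, where dist is the Hausdorff semidistance. -/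
open Filter Topology Metric Set

/-- For a uniformly asymptotically compact family of processes, the uniform ω-limit
set of a nonempty bounded set `B` uniformly (w.r.t. `σ ∈ Σ`) attracts `B`:
`lim_{t→∞} sup_{σ∈Σ} dist (U_σ(t,τ) B, ω_{τ,Σ}(B)) = 0` in the Hausdorff semidistance,
i.e. for every `ε > 0` there is `T` such that for all `t ≥ T`, all `σ` and all `x ∈ B`,
`infDist (U_σ(t,τ) x) (ω_{τ,Σ}(B)) < ε`. -/
theorem omegaLimit_uniformly_attracts {X S : Type*} [MetricSpace X] [CompleteSpace X]
    [Nonempty S]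
    (U : S → ℝ → ℝ → X → X) (hU : IsProcessFamily U)
    (hAC : UniformlyAsympCompact U)
    (B : Set X) (hB : Bornology.IsBounded B) (hBne : B.Nonempty) (τ : ℝ) :
    ∀ ε > 0, ∃ T : ℝ, ∀ t ≥ T, ∀ σ : S, ∀ x ∈ B,
      Metric.infDist (U σ t τ x) (uniformOmegaLimit U B τ) < ε := by
  by_contra h
  push_neg at h
  obtain ⟨ε, hε, hcon⟩ := h
  choose t ht σ u hu hinf using fun n : ℕ => hcon (max τ n)
  have htτ : ∀ n, τ ≤ t n := fun n => le_trans (le_max_left _ _) (ht n)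
  have htn : ∀ n : ℕ, (n : ℝ) ≤ t n := fun n => le_trans (le_max_right _ _) (ht n)
  have htop : Tendsto t atTop atTop :=
    tendsto_atTop_mono htn tendsto_natCast_atTop_atTop
  have hbdd : Bornology.IsBounded (Set.range u) :=
    hB.subset (range_subset_iff.2 hu)
  obtain ⟨φ, x, hφ, hlim⟩ := hAC τ u σ t hbdd htτ htop
  have hxω : x ∈ uniformOmegaLimit U B τ := by
    simp only [uniformOmegaLimit, mem_iInter]
    intro s hs
    apply mem_closure_of_tendsto hlim
    have htop' : Tendsto (fun n => t (φ n)) atTop atTop :=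
      htop.comp hφ.tendsto_atTop
    filter_upwards [htop'.eventually_ge_atTop s] with n hn
    exact mem_iUnion.2 ⟨σ (φ n), mem_iUnion.2 ⟨t (φ n),
      mem_iUnion.2 ⟨hn, mem_image_of_mem _ (hu (φ n))⟩⟩⟩
  have h0 : Metric.infDist x (uniformOmegaLimit U B τ) = 0 :=
    Metric.infDist_zero_of_mem hxω
  have hlim0 : Tendsto (fun n =>
      Metric.infDist (U (σ (φ n)) (t (φ n)) τ (u (φ n))) (uniformOmegaLimit U B τ))
      atTop (𝓝 0) := by
    rw [← h0]
    exact ((continuous_infDist_pt _).tendsto x).comp hlim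
  have hge : ε ≤ 0 :=
    ge_of_tendsto hlim0 (Eventually.of_forall fun n => hinf (φ n))
  linarith
end

section
/- Let {U_σ(t,τ)}, σ ∈ Σ, be a family of processes on a complete metric space X that is uniformly (with respect to σ ∈ Σ) asymptotically compact and satisfies the translation identity with respect to a translation semigroup (T(s))_{s≥0} on Σ. Then for any nonempty bounded set B ⊂ X and every τ ∈ ℝ, ω_{τ,Σ}(B) = ω_{0,Σ}(B); that is, the uniform ω-limit set is independent of the initial time τ. -/
open Filter Topology Metric Set

/-- The family of processes satisfies the translation identity with respect to the
translation semigroup `Tr` on the symbol space: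
`U_σ(t+s, τ+s) = U_{T(s)σ}(t,τ)` for `t ≥ τ`, `s ≥ 0`, and `T(s)Σ = Σ` for `s ≥ 0`. -/
def TranslationIdentity {X : Type*} {S : Type*} (U : S → ℝ → ℝ → X → X)
    (Tr : ℝ → S → S) : Prop :=
  (∀ (σ : S) (t τ s : ℝ), τ ≤ t → 0 ≤ s → ∀ x : X,
      U σ (t + s) (τ + s) x = U (Tr s σ) t τ x) ∧
  (∀ s : ℝ, 0 ≤ s → Function.Surjective (Tr s))

/-- For a uniformly asymptotically compact family of processes satisfying the
translation identity, the uniform ω-limit set is independent of the initial time: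
`ω_{τ,Σ}(B) = ω_{0,Σ}(B)` for every `τ ∈ ℝ` and every nonempty bounded `B`. -/
theorem omegaLimit_indep_of_initial_time {X S : Type*} [MetricSpace X] [CompleteSpace X]
    (U : S → ℝ → ℝ → X → X) (Tr : ℝ → S → S)
    (hU : IsProcessFamily U) (hTI : TranslationIdentity U Tr)
    (hAC : UniformlyAsympCompact U)
    (B : Set X) (hB : Bornology.IsBounded B) (hBne : B.Nonempty) :
    ∀ τ : ℝ, uniformOmegaLimit U B τ = uniformOmegaLimit U B 0 := by
  intro τ
  have key : ∀ t : ℝ, τ ≤ t →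
      (⋃ (σ : S), ⋃ s ∈ Ici t, U σ s τ '' B) =
      (⋃ (σ : S), ⋃ s ∈ Ici (t - τ), U σ s 0 '' B) := by
    intro t ht
    rcases le_or_gt 0 τ with hτ | hτ
    · ext x
      simp only [mem_iUnion, mem_image, mem_Ici, exists_prop]
      constructor
      · rintro ⟨σ, s, hs, b, hb, rfl⟩
        refine ⟨Tr τ σ, s - τ, by linarith, b, hb, ?_⟩
        have h1 := hTI.1 σ (s - τ) 0 τ (by linarith) hτ b
        rw [show s - τ + τ = s by ring, zero_add] at h1
        exact h1.symm
      · rintro ⟨σ', s', hs', b, hb, rfl⟩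
        obtain ⟨σ, rfl⟩ := hTI.2 τ hτ σ'
        refine ⟨σ, s' + τ, by linarith, b, hb, ?_⟩
        have h1 := hTI.1 σ s' 0 τ (by linarith) hτ b
        rw [zero_add] at h1
        exact h1
    · ext x
      simp only [mem_iUnion, mem_image, mem_Ici, exists_prop]
      constructor
      · rintro ⟨σ, s, hs, b, hb, rfl⟩
        obtain ⟨σ', rfl⟩ := hTI.2 (-τ) (by linarith) σ
        refine ⟨σ', s - τ, by linarith, b, hb, ?_⟩
        have h1 := hTI.1 σ' s τ (-τ) (by linarith) (by linarith) b
        rw [show s + -τ = s - τ by ring, show τ + -τ = (0:ℝ) by ring] at h1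
        exact h1
      · rintro ⟨σ', s', hs', b, hb, rfl⟩
        refine ⟨Tr (-τ) σ', s' + τ, by linarith, b, hb, ?_⟩
        have h1 := hTI.1 σ' (s' + τ) τ (-τ) (by linarith) (by linarith) b
        rw [show s' + τ + -τ = s' by ring, show τ + -τ = (0:ℝ) by ring] at h1
        exact h1.symm
  unfold uniformOmegaLimit
  have hrw : (⋂ t ∈ Ici τ, closure (⋃ (σ : S), ⋃ s ∈ Ici t, U σ s τ '' B)) =
      ⋂ t ∈ Ici τ, closure (⋃ (σ : S), ⋃ s ∈ Ici (t - τ), U σ s 0 '' B) :=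
    iInter₂_congr fun t ht => by rw [key t ht]
  rw [hrw]
  ext x
  simp only [mem_iInter, mem_Ici]
  constructor
  · intro h t ht
    have h1 := h (t + τ) (by linarith)
    rw [show t + τ - τ = t by ring] at h1
    exact h1
  · intro h t ht
    exact h (t - τ) (by linarith)
end

section
/- Let X be a Banach space and K ⊂ X a countable, relatively weakly compact subset. Then the weak closure of K (the closure of K in X equipped with its weak topology) is metrizable as a subspace of X with the weak topology. -/
open Topology

/-- If `K` is a countable, relatively weakly compact subset of a Banach space `X`,
then the weak closure of `K` (the closure of `K` in `X` with the weak topology) is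
metrizable in the weak topology. -/
theorem weak_closure_metrizable_of_countable {X : Type*}
    [NormedAddCommGroup X] [NormedSpace ℝ X] [CompleteSpace X]
    (K : Set X) (hKc : K.Countable)
    (hK : IsCompact (closure ((toWeakSpace ℝ X) '' K))) :
    TopologicalSpace.MetrizableSpace (closure ((toWeakSpace ℝ X) '' K)) := by
  classical
  set S : Submodule ℝ X := (Submodule.span ℝ K).topologicalClosure with hSdef
  -- `S` is separable
  have hsep : TopologicalSpace.IsSeparable (S : Set X) := by
    have h1 : TopologicalSpace.IsSeparable ((Submodule.span ℝ K : Submodule ℝ X) : Set X) :=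
      hKc.isSeparable.span
    exact h1.closure
  obtain ⟨c, hc_count, hc_sub⟩ := hsep
  -- norming functionals at each point of `c`
  have hfz : ∀ z : X, ∃ g : X →L[ℝ] ℝ, ‖g‖ ≤ 1 ∧ g z = ‖z‖ := fun z => exists_dual_vector'' ℝ z
  choose f hf1 hf2 using hfz
  -- these functionals separate points of `closure c`
  have hsepar : ∀ v ∈ closure c, v ≠ 0 → ∃ z ∈ c, f z v ≠ 0 := by
    intro v hv hv0
    have hvpos : (0:ℝ) < ‖v‖ / 3 := by
      have : 0 < ‖v‖ := norm_pos_iff.mpr hv0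
      linarith
    obtain ⟨z, hzc, hzd⟩ := Metric.mem_closure_iff.mp hv (‖v‖/3) hvpos
    refine ⟨z, hzc, ?_⟩
    have h1 : ‖v - z‖ < ‖v‖ / 3 := by rwa [← dist_eq_norm]
    have h2 : ‖v‖ - ‖z‖ ≤ ‖v - z‖ := norm_sub_norm_le v z
    have hbound : |(f z) (z - v)| ≤ ‖z - v‖ := by
      calc |(f z) (z - v)| = ‖(f z) (z - v)‖ := (Real.norm_eq_abs _).symm
      _ ≤ ‖f z‖ * ‖z - v‖ := (f z).le_opNorm _
      _ ≤ 1 * ‖z - v‖ := by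
          have := norm_nonneg (z - v); nlinarith [hf1 z]
      _ = ‖z - v‖ := one_mul _
    have heq : (f z) v = ‖z‖ - (f z) (z - v) := by
      have : (f z) (z - v) = (f z) z - (f z) v := map_sub _ _ _
      rw [this, hf2]; ring
    have habs := abs_le.mp hbound
    have hrev : ‖z - v‖ = ‖v - z‖ := norm_sub_rev _ _
    have hpos : 0 < (f z) v := by rw [heq]; linarith [habs.2, hrev ▸ habs.2]
    exact ne_of_gt hpos
  -- the weak closure of `K` is contained in the image of `S`
  have hKS : K ⊆ (S : Set X) := fun x hx =>
    (Submodule.le_topologicalClosure _) (Submodule.subset_span hx)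
  have hC : closure ((toWeakSpace ℝ X) '' K) ⊆ (toWeakSpace ℝ X) '' (S : Set X) := by
    have hconv : Convex ℝ (S : Set X) := S.convex
    have hclosed : IsClosed (S : Set X) := Submodule.isClosed_topologicalClosure _
    calc closure ((toWeakSpace ℝ X) '' K)
        ⊆ closure ((toWeakSpace ℝ X) '' (S : Set X)) :=
          closure_mono (Set.image_mono hKS)
      _ = (toWeakSpace ℝ X) '' closure (S : Set X) := (hconv.toWeakSpace_closure ℝ).symm
      _ = (toWeakSpace ℝ X) '' (S : Set X) := by rw [hclosed.closure_eq]
  -- `S ⊆ closure c`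
  have hScl : (S : Set X) ⊆ closure c := hc_sub
  -- the embedding into `↥c → ℝ`
  have : Countable ↥c := hc_count.to_subtype
  have : CompactSpace (closure ((toWeakSpace ℝ X) '' K)) := isCompact_iff_compactSpace.mp hK
  set C : Set (WeakSpace ℝ X) := closure ((toWeakSpace ℝ X) '' K) with hCdef
  let Φ : C → (↥c → ℝ) := fun x z => f z.val ((toWeakSpace ℝ X).symm x.val)
  have hΦcont : Continuous Φ := by
    refine continuous_pi fun z => ?_
    have h1 : Continuous fun w : WeakSpace ℝ X => f z.val ((toWeakSpace ℝ X).symm w) :=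
      WeakBilin.eval_continuous ((topDualPairing ℝ X).flip) (f z.val)
    exact h1.comp continuous_subtype_val
  have hΦinj : Function.Injective Φ := by
    intro x y hxy
    obtain ⟨a, haS, hax⟩ := hC x.property
    obtain ⟨b, hbS, hby⟩ := hC y.property
    have hab : a = b := by
      by_contra hne
      have hv : a - b ∈ (S : Set X) := S.sub_mem haS hbS
      have hv0 : a - b ≠ 0 := sub_ne_zero.mpr hne
      obtain ⟨z, hzc, hz⟩ := hsepar (a - b) (hScl hv) hv0
      have happ : Φ x ⟨z, hzc⟩ = Φ y ⟨z, hzc⟩ := congrFun hxy ⟨z, hzc⟩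
      have hxa : (toWeakSpace ℝ X).symm x.val = a := by
        rw [← hax]; exact (toWeakSpace ℝ X).symm_apply_apply a
      have hyb : (toWeakSpace ℝ X).symm y.val = b := by
        rw [← hby]; exact (toWeakSpace ℝ X).symm_apply_apply b
      have : f z a = f z b := by
        simpa [Φ, hxa, hyb] using happ
      apply hz
      rw [map_sub, this, sub_self]
    apply Subtype.ext
    rw [← hax, ← hby, hab]
  have hemb := hΦcont.isClosedEmbedding hΦinj
  exact hemb.isEmbedding.metrizableSpace
end

section
/- Let p ≥ 1 and let h : ℝ → ℝ be continuous, strictly increasing, with h(0) = 0, and satisfy |h(s)| ≤ C₁(1 + |s|^p) for all s ∈ ℝ and some constant C₁ > 0. Then there exists a constant C > 0, independent of s, such that |h(s)|^{(p+1)/p} ≤ C(1 + h(s)·s) for all s ∈ ℝ. -/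
/-!
Split at `|s| = 1`. For `|s| ≤ 1` the growth bound makes `h s` bounded by `2C₁`. For `|s| ≥ 1` it
gives `|h s| ≤ 2C₁|s|^p`, i.e. `|h s|^(1/p) ≤ (2C₁)^(1/p)|s|`, so
`|h s|^((p+1)/p) = |h s| · |h s|^(1/p) ≤ (2C₁)^(1/p) |h s||s|`, and `|h s||s| = h s · s` because a
monotone `h` with `h 0 = 0` has the sign of its argument.
-/

open Real

theorem Monotone.zero_le_apply_mul_self {f : ℝ → ℝ} (hf : Monotone f) (h0 : f 0 = 0) (x : ℝ) :
    0 ≤ f x * x := by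
  rcases le_total 0 x with hx | hx
  · exact mul_nonneg (h0 ▸ hf hx) hx
  · exact mul_nonneg_of_nonpos_of_nonpos (h0 ▸ hf hx) hx

theorem Real.rpow_add_one_div_le_of_le_mul_rpow {p a t K : ℝ} (hp : 0 < p) (ha : 0 ≤ a)
    (ht : 0 ≤ t) (hK : 0 ≤ K) (hat : a ≤ K * t ^ p) :
    a ^ ((p + 1) / p) ≤ K ^ (1 / p) * (a * t) := by
  have hroot : a ^ (1 / p) ≤ K ^ (1 / p) * t :=
    calc a ^ (1 / p) ≤ (K * t ^ p) ^ (1 / p) := rpow_le_rpow ha hat (by positivity)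
      _ = K ^ (1 / p) * t := by
        rw [mul_rpow hK (rpow_nonneg ht p), ← rpow_mul ht, mul_one_div_cancel hp.ne', rpow_one]
  calc a ^ ((p + 1) / p) = a * a ^ (1 / p) := by
        rw [add_div, div_self hp.ne', rpow_add' ha (by positivity), rpow_one]
    _ ≤ a * (K ^ (1 / p) * t) := mul_le_mul_of_nonneg_left hroot ha
    _ = K ^ (1 / p) * (a * t) := by ring

theorem damping_power_estimate_general (p : ℝ) (hp : 1 ≤ p)
    (h : ℝ → ℝ) (hmono : StrictMono h) (h0 : h 0 = 0)
    (C₁ : ℝ) (hC₁ : 0 < C₁) (hgrowth : ∀ s : ℝ, |h s| ≤ C₁ * (1 + |s| ^ p)) :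
    ∃ C > 0, ∀ s : ℝ, |h s| ^ ((p + 1) / p) ≤ C * (1 + h s * s) := by
  have hp0 : 0 < p := by linarith
  have hK : 0 < 2 * C₁ := by linarith
  refine ⟨(2 * C₁) ^ ((p + 1) / p) + (2 * C₁) ^ (1 / p), by positivity, fun s => ?_⟩
  have hsign := hmono.monotone.zero_le_apply_mul_self h0 s
  have hsmall := rpow_nonneg hK.le ((p + 1) / p)
  have hlarge := rpow_nonneg hK.le (1 / p)
  rcases le_total |s| 1 with hs | hs
  · have hsp := rpow_le_one (abs_nonneg s) hs hp0.le
    have hbound : |h s| ≤ 2 * C₁ := by nlinarith [hgrowth s]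
    calc |h s| ^ ((p + 1) / p) ≤ (2 * C₁) ^ ((p + 1) / p) :=
          rpow_le_rpow (abs_nonneg _) hbound (by positivity)
      _ ≤ _ := by nlinarith
  · have hsp := one_le_rpow hs hp0.le
    have hbound : |h s| ≤ 2 * C₁ * |s| ^ p := by nlinarith [hgrowth s]
    calc |h s| ^ ((p + 1) / p) ≤ (2 * C₁) ^ (1 / p) * (|h s| * |s|) :=
          rpow_add_one_div_le_of_le_mul_rpow hp0 (abs_nonneg _) (abs_nonneg _) hK.le hbound
      _ = (2 * C₁) ^ (1 / p) * (h s * s) := by rw [← abs_mul, abs_of_nonneg hsign]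
      _ ≤ _ := by nlinarith

/-- If `h : ℝ → ℝ` is continuous, strictly increasing, vanishes at `0`, and satisfies
the growth bound `|h(s)| ≤ C₁(1 + |s|^p)` with `p ≥ 1`, then there is a constant
`C > 0`, independent of `s`, such that `|h(s)|^((p+1)/p) ≤ C(1 + h(s)·s)` for all `s`. -/
theorem damping_power_estimate (p : ℝ) (hp : 1 ≤ p)
    (h : ℝ → ℝ) (hcont : Continuous h) (hmono : StrictMono h) (h0 : h 0 = 0)
    (C₁ : ℝ) (hC₁ : 0 < C₁) (hgrowth : ∀ s : ℝ, |h s| ≤ C₁ * (1 + |s| ^ p)) :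
    ∃ C > 0, ∀ s : ℝ, |h s| ^ ((p + 1) / p) ≤ C * (1 + h s * s) :=
  damping_power_estimate_general p hp h hmono h0 C₁ hC₁ hgrowth
end
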